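/- Fix integers i and n with n sufficiently large, J, K ∈ ℂ, and consider the operator E_{-n} = -∑_{m,k∈ℤ} x_{k+m-n} ∂x_k ∂x_m + ∑_{k>0} y_k ∂x_{-k+n} + 2K ∑_{m>0} m ∂y_m ∂x_{m+n} + (-Kn+J) ∂x_n on ℂ[x_n : n∈ℤ][y_m : m≥1]. For any polynomial v and any j ∈ ℤ, there exists N such that for all n > N: E_{-n}(v) = y_{n-j} ∂x_j(v) + v', where v' satisfies ∂y_{n-j}(v') = 0. -/

import Mathlib

/-!
The derivation `∂y_t` commutes with every term of `E_{-n}` except `∑_k y_k ∂x_{n-k}`, so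
`∂y_t ∘ E_{-n} = E_{-n} ∘ ∂y_t + ∂x_{n-t}`. Once `n - j` exceeds the index of every `y`-variable
occurring in `v`, we have `∂y_{n-j} v = 0`, hence `∂y_{n-j} (E_{-n} v) = ∂x_j v`, which is exactly
`∂y_{n-j}` of `y_{n-j} ∂x_j v`.
-/

open MvPolynomial

/-- Index type for the variables `x_n (n ∈ ℤ)` and `y_m (m ≥ 1)`. -/
abbrev XYVar : Type := ℤ ⊕ ℕ+

/-- The operator `E_{-n} = -∑_{m,k} x_{k+m-n} ∂x_k ∂x_m + ∑_{k>0} y_k ∂x_{n-k}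
+ 2K ∑_{m>0} m ∂y_m ∂x_{m+n} + (-Kn+J) ∂x_n` of the first free field realization. -/
noncomputable def EnegOp (J K : ℂ) (n : ℤ) (p : MvPolynomial XYVar ℂ) : MvPolynomial XYVar ℂ :=
  -(∑ᶠ s : ℤ × ℤ, X (Sum.inl (s.1 + s.2 - n)) * pderiv (Sum.inl s.1) (pderiv (Sum.inl s.2) p)) +
  (∑ᶠ k : ℕ+, X (Sum.inr k) * pderiv (Sum.inl (n - (k : ℕ))) p) +
  (2 * K) • (∑ᶠ m : ℕ+, ((m : ℕ) : ℂ) • pderiv (Sum.inr m) (pderiv (Sum.inl ((m : ℕ) + n)) p)) +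
  (-K * (n : ℂ) + J) • pderiv (Sum.inl n) p

open Function

namespace MvPolynomial

variable {σ ι R : Type*} [CommSemiring R]

theorem pderiv_pderiv_comm (i k : σ) (p : MvPolynomial σ R) :
    pderiv i (pderiv k p) = pderiv k (pderiv i p) := by
  classical
  induction p using MvPolynomial.induction_on with
  | C a => simp
  | add p q hp hq => simp [hp, hq]
  | mul_X p s hp =>
    simp only [pderiv_mul, map_add, hp, pderiv_X, Pi.single_apply, apply_ite, map_zero, pderiv_one]
    split_ifs <;> abel

theorem pderiv_X_mul_of_ne {i k : σ} (h : k ≠ i) (p : MvPolynomial σ R) :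
    pderiv i (X k * p) = X k * pderiv i p := by
  rw [pderiv_mul, pderiv_X_of_ne h, zero_mul, zero_add]

theorem hasFiniteSupport_pderiv {e : ι → σ} (he : Injective e) (p : MvPolynomial σ R) :
    HasFiniteSupport fun a => pderiv (e a) p :=
  (p.vars.finite_toSet.preimage he.injOn).subset fun _ ha =>
    not_not.mp (mt pderiv_eq_zero_of_notMem_vars ha)

theorem hasFiniteSupport_pderiv_pderiv {e : ι → σ} (he : Injective e) (p : MvPolynomial σ R) :
    HasFiniteSupport fun s : ι × ι => pderiv (e s.1) (pderiv (e s.2) p) :=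
  ((hasFiniteSupport_pderiv he p).prod (hasFiniteSupport_pderiv he p)).subset fun s hs =>
    ⟨fun h => hs (by simp only [pderiv_pderiv_comm (e s.1), h, map_zero]),
      fun h => hs (by simp only [h, map_zero])⟩

end MvPolynomial

theorem EnegOp_zero (J K : ℂ) (n : ℤ) : EnegOp J K n 0 = 0 := by
  simp [EnegOp]

theorem pderiv_inr_EnegOp (J K : ℂ) (n : ℤ) (t : ℕ+) (p : MvPolynomial XYVar ℂ) :
    pderiv (Sum.inr t) (EnegOp J K n p) =
      EnegOp J K n (pderiv (Sum.inr t) p) + pderiv (Sum.inl (n - (t : ℕ))) p := by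
  have hquad : pderiv (Sum.inr t)
        (∑ᶠ s : ℤ × ℤ, X (Sum.inl (s.1 + s.2 - n)) * pderiv (Sum.inl s.1) (pderiv (Sum.inl s.2) p)) =
      ∑ᶠ s : ℤ × ℤ, X (Sum.inl (s.1 + s.2 - n)) *
        pderiv (Sum.inl s.1) (pderiv (Sum.inl s.2) (pderiv (Sum.inr t) p)) := by
    rw [map_finsum _ ((hasFiniteSupport_pderiv_pderiv Sum.inl_injective p).subset
      (support_mul_subset_right _ _))]
    simp only [pderiv_X_mul_of_ne Sum.inl_ne_inr, pderiv_pderiv_comm (Sum.inr t)]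
  have hy : pderiv (Sum.inr t) (∑ᶠ k : ℕ+, X (Sum.inr k) * pderiv (Sum.inl (n - (k : ℕ))) p) =
      ∑ᶠ k : ℕ+, X (Sum.inr k) * pderiv (Sum.inl (n - (k : ℕ))) (pderiv (Sum.inr t) p) +
        pderiv (Sum.inl (n - (t : ℕ))) p := by
    have hinj : Injective fun k : ℕ+ => (Sum.inl (n - (k : ℕ)) : XYVar) :=
      fun a b h => by simpa using h
    have hfin := hasFiniteSupport_pderiv hinj p
    rw [map_finsum _ (hfin.subset (support_mul_subset_right _ _))]
    simp only [pderiv_mul, pderiv_pderiv_comm (Sum.inr t) (Sum.inl _)]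
    rw [finsum_add_distrib (hfin.subset (support_mul_subset_right _ _))
        ((hasFiniteSupport_pderiv hinj _).subset (support_mul_subset_right _ _)),
      finsum_eq_single _ t fun k hk => by rw [pderiv_X_of_ne (by simpa using hk), zero_mul],
      pderiv_X_self, one_mul, add_comm]
  have hlevel : pderiv (Sum.inr t)
        (∑ᶠ m : ℕ+, ((m : ℕ) : ℂ) • pderiv (Sum.inr m) (pderiv (Sum.inl ((m : ℕ) + n)) p)) =
      ∑ᶠ m : ℕ+, ((m : ℕ) : ℂ) • pderiv (Sum.inr m)
        (pderiv (Sum.inl ((m : ℕ) + n)) (pderiv (Sum.inr t) p)) := by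
    have hinj : Injective fun m : ℕ+ => (Sum.inl ((m : ℕ) + n) : XYVar) :=
      fun a b h => by simpa using h
    rw [map_finsum _ ((hasFiniteSupport_pderiv hinj p).subset fun m hm h => hm (by simp [h]))]
    simp only [Derivation.map_smul, pderiv_pderiv_comm (Sum.inr t)]
  simp only [EnegOp, map_add, map_neg, Derivation.map_smul, hquad, hy, hlevel,
    pderiv_pderiv_comm (Sum.inr t)]
  abel

/-- for fixed `v` and `j`, and all sufficiently large `n`,
`E_{-n}(v) = y_{n-j} ∂x_j(v) + v'` with `∂y_{n-j}(v') = 0`. -/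
theorem stmt15 (J K : ℂ) (v : MvPolynomial XYVar ℂ) (j : ℤ) :
    ∃ N : ℤ, j ≤ N ∧ ∀ n : ℤ, N < n → ∃ v' : MvPolynomial XYVar ℂ,
      EnegOp J K n v = X (Sum.inr (n - j).toNat.toPNat') * pderiv (Sum.inl j) v + v' ∧
      pderiv (Sum.inr (n - j).toNat.toPNat') v' = 0 := by
  set B : ℕ := v.vars.sup (Sum.elim 0 PNat.val)
  have hB (m : ℕ+) (hm : Sum.inr m ∈ v.vars) : (m : ℕ) ≤ B :=
    Finset.le_sup (f := Sum.elim 0 PNat.val) hm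
  refine ⟨j + B, by omega, fun n hn => ?_⟩
  set t := (n - j).toNat.toPNat'
  have ht : ((t : ℕ) : ℤ) = n - j := by
    rw [PNat.toPNat'_coe (by omega), Int.toNat_of_nonneg (by omega)]
  have hvt : pderiv (Sum.inr t) v = 0 :=
    pderiv_eq_zero_of_notMem_vars fun h => by have := hB t h; omega
  refine ⟨EnegOp J K n v - X (Sum.inr t) * pderiv (Sum.inl j) v, by ring, ?_⟩
  rw [map_sub, pderiv_inr_EnegOp, hvt, pderiv_mul, pderiv_X_self, pderiv_pderiv_comm, hvt,
    EnegOp_zero, map_zero, show n - ((t : ℕ) : ℤ) = j by omega]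
  ring
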